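/- Under the permutation null distribution, for all integers 0 ≤ t1 < t2 ≤ n, the covariance of U1^π(t1,t2) and U2^π(t1,t2) equals A(t2 − t1)·((r_d² − r0²) − 2(n−1)(r1² − r0²)). -/

import Mathlib

open Finset

namespace RING

/-- `U1^π(t1,t2)`: sum of `R (π i) (π j)` over indices (1-based `i,j ∈ {1,…,n}`,
represented by `Fin n` with `i` standing for index `i+1`) with `t1 < i ≤ t2` and
`t1 < j ≤ t2`. -/
noncomputable def U1 (n : ℕ) (R : Fin n → Fin n → ℝ) (π : Equiv.Perm (Fin n))
    (t1 t2 : ℕ) : ℝ :=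
  ∑ i : Fin n, ∑ j : Fin n,
    if t1 ≤ (i : ℕ) ∧ (i : ℕ) < t2 ∧ t1 ≤ (j : ℕ) ∧ (j : ℕ) < t2 then R (π i) (π j) else 0

/-- `U2^π(t1,t2)`: sum of `R (π i) (π j)` over indices with `i ≤ t1` or `i > t2`,
and `j ≤ t1` or `j > t2`. -/
noncomputable def U2 (n : ℕ) (R : Fin n → Fin n → ℝ) (π : Equiv.Perm (Fin n))
    (t1 t2 : ℕ) : ℝ :=
  ∑ i : Fin n, ∑ j : Fin n,
    if ((i : ℕ) < t1 ∨ t2 ≤ (i : ℕ)) ∧ ((j : ℕ) < t1 ∨ t2 ≤ (j : ℕ)) then R (π i) (π j) else 0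

/-- Expectation under the permutation null distribution (uniform over all `n!`
permutations). -/
noncomputable def pexp (n : ℕ) (f : Equiv.Perm (Fin n) → ℝ) : ℝ :=
  (∑ π : Equiv.Perm (Fin n), f π) / (Nat.factorial n)

/-- Variance under the permutation null distribution. -/
noncomputable def pvar (n : ℕ) (f : Equiv.Perm (Fin n) → ℝ) : ℝ :=
  pexp n (fun π => (f π - pexp n f) ^ 2)

/-- Covariance under the permutation null distribution. -/
noncomputable def pcov (n : ℕ) (f g : Equiv.Perm (Fin n) → ℝ) : ℝ :=
  pexp n (fun π => (f π - pexp n f) * (g π - pexp n g))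

/-- `R̄_{i·} = (Σ_j R_{ij})/(n-1)`. -/
noncomputable def Rbar (n : ℕ) (R : Fin n → Fin n → ℝ) (i : Fin n) : ℝ :=
  (∑ j : Fin n, R i j) / ((n : ℝ) - 1)

/-- `r0 = (1/n) Σ_i R̄_{i·}`. -/
noncomputable def r0 (n : ℕ) (R : Fin n → Fin n → ℝ) : ℝ :=
  (∑ i : Fin n, Rbar n R i) / n

/-- `r1² = (1/n) Σ_i R̄_{i·}²`. -/
noncomputable def r1sq (n : ℕ) (R : Fin n → Fin n → ℝ) : ℝ :=
  (∑ i : Fin n, (Rbar n R i) ^ 2) / n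

/-- `r_d² = (1/(n(n-1))) Σ_i Σ_j R_{ij}²`. -/
noncomputable def rdsq (n : ℕ) (R : Fin n → Fin n → ℝ) : ℝ :=
  (∑ i : Fin n, ∑ j : Fin n, (R i j) ^ 2) / ((n : ℝ) * ((n : ℝ) - 1))

/-- `A(t) = 2t(t-1)(n-t)(n-t-1)/((n-2)(n-3))`. -/
noncomputable def A (n t : ℕ) : ℝ :=
  2 * (t : ℝ) * ((t : ℝ) - 1) * ((n : ℝ) - t) * ((n : ℝ) - t - 1) /
    (((n : ℝ) - 2) * ((n : ℝ) - 3))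

/-- `B(t) = 4t(n-t)(t-1)(t-2)(n-1)/((n-2)(n-3))`. -/
noncomputable def B (n t : ℕ) : ℝ :=
  4 * (t : ℝ) * ((n : ℝ) - t) * ((t : ℝ) - 1) * ((t : ℝ) - 2) * ((n : ℝ) - 1) /
    (((n : ℝ) - 2) * ((n : ℝ) - 3))

/-- `U_diff^π = U1^π − U2^π`. -/
noncomputable def Udiff (n : ℕ) (R : Fin n → Fin n → ℝ) (π : Equiv.Perm (Fin n))
    (t1 t2 : ℕ) : ℝ :=
  U1 n R π t1 t2 - U2 n R π t1 t2

/-- `U_w^π = ((n−t2+t1−1)·U1^π + (t2−t1−1)·U2^π)/(n−2)`. -/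
noncomputable def Uw (n : ℕ) (R : Fin n → Fin n → ℝ) (π : Equiv.Perm (Fin n))
    (t1 t2 : ℕ) : ℝ :=
  (((n : ℝ) - t2 + t1 - 1) * U1 n R π t1 t2 + ((t2 : ℝ) - t1 - 1) * U2 n R π t1 t2) /
    ((n : ℝ) - 2)

/-- Standardized `Z_w^π(t1,t2)`. -/
noncomputable def Zw (n : ℕ) (R : Fin n → Fin n → ℝ) (π : Equiv.Perm (Fin n))
    (t1 t2 : ℕ) : ℝ :=
  (Uw n R π t1 t2 - pexp n (fun σ => Uw n R σ t1 t2)) /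
    Real.sqrt (pvar n (fun σ => Uw n R σ t1 t2))

/-- Standardized `Z_diff^π(t1,t2)`. -/
noncomputable def Zdiff (n : ℕ) (R : Fin n → Fin n → ℝ) (π : Equiv.Perm (Fin n))
    (t1 t2 : ℕ) : ℝ :=
  (Udiff n R π t1 t2 - pexp n (fun σ => Udiff n R σ t1 t2)) /
    Real.sqrt (pvar n (fun σ => Udiff n R σ t1 t2))

end RING

open RING

/-!
For an injective tuple `v : Fin m → Fin n` and a uniform permutation `σ`, the tuple `σ ∘ v` is
uniform on injective tuples, because permutations act transitively on embeddings
`Fin m ↪ Fin n`. So `𝔼 R(σi,σj)` is the same for all `i ≠ j`, namely `S / (n(n-1))` with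
`S = ∑ R_ab`, and `𝔼 R(σi,σj) R(σk,σl)` is the same for all distinct `i, j, k, l`, namely the sum
of `R_ab R_cd` over distinct quadruples divided by `n(n-1)(n-2)(n-3)`; by inclusion–exclusion
that sum is `S² - 4 ∑_a R_a·² + 2 ∑ R_ab²`. Since `R` vanishes on the diagonal, `U1` and `U2`
are sums over the off-diagonal pairs of the block `(t1, t2]` and of its complement, so their
covariance is `m(m-1)(n-m)(n-m-1)` times a fixed combination of these three sums, with
`m = t2 - t1`; this is the stated formula.
-/

open Finset Function Matrix

theorem MulAction.card_nsmul_sum_smul_eq {G X M : Type*} [Group G] [Fintype G] [MulAction G X]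
    [Fintype X] [MulAction.IsPretransitive G X] [AddCommMonoid M] (f : X → M) (x : X) :
    Fintype.card X • ∑ g : G, f (g • x) = Fintype.card G • ∑ y, f y := by
  have hconst : ∀ y : X, ∑ g : G, f (g • y) = ∑ g : G, f (g • x) := by
    intro y
    obtain ⟨h, rfl⟩ := MulAction.exists_smul_eq G x y
    simp_rw [smul_smul]
    exact Fintype.sum_equiv (Equiv.mulRight h) _ _ fun _ => rfl
  calc Fintype.card X • ∑ g : G, f (g • x) = ∑ y : X, ∑ g : G, f (g • y) := by
        simp [hconst]
    _ = ∑ g : G, ∑ y : X, f (g • y) := Finset.sum_comm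
    _ = ∑ g : G, ∑ y : X, f y := by
        refine Finset.sum_congr rfl fun g _ => ?_
        exact Fintype.sum_bijective _ (MulAction.bijective g) _ _ fun _ => rfl
    _ = Fintype.card G • ∑ y, f y := by simp

theorem Fintype.sum_embedding_eq_sum_ite {ι α M : Type*} [Fintype ι] [DecidableEq ι] [Fintype α]
    [DecidableEq α] [AddCommMonoid M] (F : (ι → α) → M) :
    ∑ w : ι ↪ α, F w = ∑ f, if Injective f then F f else 0 := by
  rw [← Finset.sum_filter, Finset.sum_subtype (p := Injective) _ (by simp)]
  exact Fintype.sum_equiv (Equiv.subtypeInjectiveEquivEmbedding ι α).symm _ _ fun _ => rfl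

theorem Fintype.sum_fun_fin_succ {α M : Type*} [Fintype α] [AddCommMonoid M] {m : ℕ}
    (G : (Fin (m + 1) → α) → M) :
    ∑ f, G f = ∑ a, ∑ g : Fin m → α, G (vecCons a g) := by
  rw [← Fintype.sum_prod_type']
  exact (Fintype.sum_equiv (Fin.consEquiv fun _ => α) _ _ fun _ => rfl).symm

theorem Matrix.vecCons_injective_iff {α : Type*} {m : ℕ} {a : α} {f : Fin m → α} :
    Injective (vecCons a f) ↔ a ∉ Set.range f ∧ Injective f :=
  Fin.cons_injective_iff

theorem Finset.sum_ite_ne_and_ne {α M : Type*} [Fintype α] [DecidableEq α] [AddCommGroup M]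
    {a b : α} (hab : a ≠ b) (g : α → M) :
    ∑ x, (if x ≠ a ∧ x ≠ b then g x else 0) = ∑ x, g x - g a - g b := by
  have hs : univ.filter (fun x => x ≠ a ∧ x ≠ b) = univ \ {a, b} := by ext; simp
  rw [← Finset.sum_filter, hs, Finset.sum_sdiff_eq_sub (subset_univ _), Finset.sum_pair hab,
    sub_add_eq_sub_sub]

theorem Finset.sum_offDiag_eq_sum_sum {α M : Type*} [DecidableEq α] [AddCommMonoid M]
    (s : Finset α) {g : α → α → M} (hg : ∀ a, g a a = 0) :
    ∑ x ∈ s.offDiag, g x.1 x.2 = ∑ i ∈ s, ∑ j ∈ s, g i j := by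
  rw [← Finset.sum_product', ← Finset.diag_union_offDiag,
    Finset.sum_union (Finset.disjoint_diag_offDiag s),
    Finset.sum_eq_zero (s := s.diag) fun x hx => by rw [(Finset.mem_diag.1 hx).2, hg], zero_add]

theorem Finset.cast_card_offDiag {α S : Type*} [DecidableEq α] [Ring S] (s : Finset α) :
    (#s.offDiag : S) = #s * (#s - 1) := by
  rw [Finset.offDiag_card, Nat.cast_sub (Nat.le_mul_self _), Nat.cast_mul, mul_sub, mul_one]

theorem Nat.cast_descFactorial_four {S : Type*} [Ring S] (a : ℕ) :
    (a.descFactorial 4 : S) = a * (a - 1) * (a - 2) * (a - 3) := by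
  rw [← descPochhammer_eval_eq_descFactorial]
  simp only [descPochhammer_succ_eval, descPochhammer_zero, Polynomial.eval_one]
  norm_num

namespace RING

variable {n : ℕ}

theorem pexp_sum {ι : Type*} (s : Finset ι) (f : ι → Equiv.Perm (Fin n) → ℝ) :
    pexp n (fun π => ∑ x ∈ s, f x π) = ∑ x ∈ s, pexp n (f x) := by
  simp only [pexp, Finset.sum_div]
  exact Finset.sum_comm

theorem pcov_eq_pexp_mul_sub (f g : Equiv.Perm (Fin n) → ℝ) :
    pcov n f g = pexp n (fun π => f π * g π) - pexp n f * pexp n g := by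
  simp only [pcov, pexp, sub_mul, mul_sub, Finset.sum_sub_distrib, ← Finset.sum_mul,
    ← Finset.mul_sum, Finset.sum_const, Finset.card_univ, Fintype.card_perm, Fintype.card_fin,
    nsmul_eq_mul]
  field_simp
  ring

theorem pexp_comp_injective {m : ℕ} (F : (Fin m → Fin n) → ℝ) {v : Fin m → Fin n}
    (hv : Injective v) :
    pexp n (fun σ => F (σ ∘ v)) =
      (∑ f, if Injective f then F f else 0) / n.descFactorial m := by
  have : MulAction.IsPretransitive (Equiv.Perm (Fin n)) (Fin m ↪ Fin n) :=
    Equiv.Perm.isMultiplyPretransitive (Fin n) m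
  have key := MulAction.card_nsmul_sum_smul_eq (G := Equiv.Perm (Fin n))
    (fun w : Fin m ↪ Fin n => F w) ⟨v, hv⟩
  rw [Fintype.card_embedding_eq, Fintype.card_perm, Fintype.card_fin, Fintype.card_fin,
    Fintype.sum_embedding_eq_sum_ite] at key
  have hm : n.descFactorial m ≠ 0 := by
    rw [Ne, Nat.descFactorial_eq_zero_iff_lt, not_lt]
    simpa using Fintype.card_le_of_injective v hv
  have hN : (n.factorial : ℝ) ≠ 0 := Nat.cast_ne_zero.2 n.factorial_ne_zero
  simp only [nsmul_eq_mul] at key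
  rw [pexp, div_eq_div_iff hN (by exact_mod_cast hm), mul_comm]
  exact key.trans (mul_comm _ _)

variable (R : Fin n → Fin n → ℝ)

theorem sum_injective_pair (hdiag : ∀ i, R i i = 0) :
    ∑ f : Fin 2 → Fin n, (if Injective f then R (f 0) (f 1) else 0) = ∑ a, ∑ b, R a b := by
  simp only [Fintype.sum_fun_fin_succ, Fintype.sum_unique, vecCons_injective_iff,
    injective_of_subsingleton, range_cons, range_empty, Set.union_empty, Set.mem_singleton_iff,
    and_true, cons_val_zero, cons_val_one, cons_val_fin_one, ite_not]
  exact Finset.sum_congr rfl fun a _ => Finset.sum_congr rfl fun b _ => by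
    split_ifs with h <;> simp [h, hdiag]

theorem sum_sum_avoiding_pair (hsym : ∀ i j, R i j = R j i) (hdiag : ∀ i, R i i = 0)
    {a b : Fin n} (hab : a ≠ b) :
    ∑ c, (if c ≠ a ∧ c ≠ b then ∑ d, (if d ≠ a ∧ d ≠ b then R c d else 0) else 0) =
      ∑ c, ∑ d, R c d - 2 * ∑ d, R a d - 2 * ∑ d, R b d + 2 * R a b := by
  have hcol : ∀ x, ∑ c, R c x = ∑ c, R x c := fun x => Finset.sum_congr rfl fun c _ => hsym c x
  simp only [Finset.sum_ite_ne_and_ne hab, Finset.sum_sub_distrib, hcol, hdiag, hsym b a]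
  ring

theorem sum_sum_mul_sum_sub_rows (hsym : ∀ i j, R i j = R j i) :
    ∑ a, ∑ b, R a b * (∑ c, ∑ d, R c d - 2 * ∑ d, R a d - 2 * ∑ d, R b d + 2 * R a b) =
      (∑ a, ∑ b, R a b) ^ 2 - 4 * ∑ a, (∑ b, R a b) ^ 2 + 2 * ∑ a, ∑ b, R a b ^ 2 := by
  have h1 : ∑ a, ∑ b, R a b * ∑ c, ∑ d, R c d = (∑ a, ∑ b, R a b) ^ 2 := by
    simp only [← Finset.sum_mul, sq]
  have h2 : ∑ a, ∑ b, R a b * (2 * ∑ d, R a d) = 2 * ∑ a, (∑ b, R a b) ^ 2 := by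
    rw [Finset.mul_sum]
    refine Finset.sum_congr rfl fun a _ => ?_
    rw [← Finset.sum_mul]
    ring
  have h3 : ∑ a, ∑ b, R a b * (2 * ∑ d, R b d) = 2 * ∑ a, (∑ b, R a b) ^ 2 := by
    rw [Finset.sum_comm, Finset.mul_sum]
    refine Finset.sum_congr rfl fun b _ => ?_
    rw [← Finset.sum_mul, Finset.sum_congr rfl fun a _ => hsym a b]
    ring
  have h4 : ∑ a, ∑ b, R a b * (2 * R a b) = 2 * ∑ a, ∑ b, R a b ^ 2 := by
    simp only [Finset.mul_sum]
    ring_nf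
  simp only [mul_add, mul_sub, Finset.sum_add_distrib, Finset.sum_sub_distrib]
  linear_combination h1 - h2 - h3 + h4

theorem sum_injective_quad (hsym : ∀ i j, R i j = R j i) (hdiag : ∀ i, R i i = 0) :
    ∑ f : Fin 4 → Fin n, (if Injective f then R (f 0) (f 1) * R (f 2) (f 3) else 0) =
      (∑ a, ∑ b, R a b) ^ 2 - 4 * ∑ a, (∑ b, R a b) ^ 2 + 2 * ∑ a, ∑ b, R a b ^ 2 := by
  have hsupport : ∀ a b c d : Fin n,
      (if (a ≠ d ∧ a ≠ c ∧ a ≠ b) ∧ (b ≠ d ∧ b ≠ c) ∧ c ≠ d then R a b * R c d else 0) =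
        R a b * if c ≠ a ∧ c ≠ b then (if d ≠ a ∧ d ≠ b then R c d else 0) else 0 := by
    intro a b c d
    rcases eq_or_ne a b with rfl | hab
    · simp [hdiag]
    rcases eq_or_ne c d with rfl | hcd
    · simp [hdiag]
    split_ifs <;> simp_all [eq_comm]
  simp only [Fintype.sum_fun_fin_succ, Fintype.sum_unique, vecCons_injective_iff,
    injective_of_subsingleton, range_cons, range_empty, Set.union_empty, Set.union_singleton,
    Set.union_insert, Set.mem_insert_iff, Set.mem_singleton_iff, not_or, and_true, cons_val_zero,
    cons_val_one, Matrix.cons_val, hsupport, ← Finset.mul_sum, ← Finset.ite_sum_zero]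
  rw [← sum_sum_mul_sum_sub_rows R hsym]
  refine Finset.sum_congr rfl fun a _ => Finset.sum_congr rfl fun b _ => ?_
  rcases eq_or_ne a b with rfl | hab
  · simp [hdiag]
  · rw [sum_sum_avoiding_pair R hsym hdiag hab]

theorem pexp_apply_apply (hdiag : ∀ i, R i i = 0) {i j : Fin n} (hij : i ≠ j) :
    pexp n (fun σ => R (σ i) (σ j)) = (∑ a, ∑ b, R a b) / (n * (n - 1)) := by
  have h := pexp_comp_injective (fun f : Fin 2 → Fin n => R (f 0) (f 1)) (v := ![i, j])
    (by simpa [vecCons_injective_iff, injective_of_subsingleton] using hij)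
  rwa [sum_injective_pair R hdiag, Nat.cast_descFactorial_two] at h

theorem pexp_apply_mul_apply (hsym : ∀ i j, R i j = R j i) (hdiag : ∀ i, R i i = 0)
    {i j k l : Fin n} (hijkl : Injective ![i, j, k, l]) :
    pexp n (fun σ => R (σ i) (σ j) * R (σ k) (σ l)) =
      ((∑ a, ∑ b, R a b) ^ 2 - 4 * ∑ a, (∑ b, R a b) ^ 2 + 2 * ∑ a, ∑ b, R a b ^ 2) /
        (n * (n - 1) * (n - 2) * (n - 3)) := by
  have h := pexp_comp_injective
    (fun f : Fin 4 → Fin n => R (f 0) (f 1) * R (f 2) (f 3)) hijkl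
  rwa [sum_injective_quad R hsym hdiag, Nat.cast_descFactorial_four] at h

theorem pexp_sum_offDiag (hdiag : ∀ i, R i i = 0) (s : Finset (Fin n)) :
    pexp n (fun σ => ∑ x ∈ s.offDiag, R (σ x.1) (σ x.2)) =
      #s * (#s - 1) * ((∑ a, ∑ b, R a b) / (n * (n - 1))) := by
  rw [pexp_sum, Finset.sum_congr rfl fun x hx =>
    pexp_apply_apply R hdiag (Finset.mem_offDiag.1 hx).2.2, Finset.sum_const, nsmul_eq_mul,
    Finset.cast_card_offDiag]

theorem pexp_sum_offDiag_mul_sum_offDiag (hsym : ∀ i j, R i j = R j i)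
    (hdiag : ∀ i, R i i = 0) {s t : Finset (Fin n)} (hst : Disjoint s t) :
    pexp n (fun σ => (∑ x ∈ s.offDiag, R (σ x.1) (σ x.2)) * ∑ y ∈ t.offDiag, R (σ y.1) (σ y.2)) =
      #s * (#s - 1) * (#t * (#t - 1)) *
        (((∑ a, ∑ b, R a b) ^ 2 - 4 * ∑ a, (∑ b, R a b) ^ 2 + 2 * ∑ a, ∑ b, R a b ^ 2) /
          (n * (n - 1) * (n - 2) * (n - 3))) := by
  have hinj : ∀ x ∈ s.offDiag, ∀ y ∈ t.offDiag, Injective ![x.1, x.2, y.1, y.2] := by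
    rintro ⟨a, b⟩ hx ⟨c, d⟩ hy
    simp only [Finset.mem_offDiag] at hx hy
    have := Finset.disjoint_left.1 hst
    simp only [vecCons_injective_iff, injective_of_subsingleton, range_cons, range_empty,
      Set.union_empty, Set.union_singleton, Set.union_insert, Set.mem_insert_iff,
      Set.mem_singleton_iff, not_or, and_true]
    refine ⟨⟨?_, ?_, hx.2.2⟩, ⟨?_, ?_⟩, hy.2.2⟩ <;> rintro rfl <;> simp_all
  simp only [Finset.sum_mul_sum, pexp_sum]
  rw [Finset.sum_congr rfl fun x hx => Finset.sum_congr rfl fun y hy =>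
    pexp_apply_mul_apply R hsym hdiag (hinj x hx y hy)]
  simp only [Finset.sum_const, nsmul_eq_mul, Finset.cast_card_offDiag]
  ring

/-- The 0-based indices of the block `t1 < i ≤ t2` of `U1`. -/
def window (n t1 t2 : ℕ) : Finset (Fin n) :=
  univ.filter fun i => t1 ≤ (i : ℕ) ∧ (i : ℕ) < t2

theorem card_window {t1 t2 : ℕ} (h2n : t2 ≤ n) : #(window n t1 t2) = t2 - t1 := by
  rw [← Nat.card_Ico t1 t2, ← Finset.card_map Fin.valEmbedding]
  congr 1
  ext m
  simp only [window, Finset.mem_map, Finset.mem_filter, Finset.mem_univ, true_and,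
    Fin.valEmbedding_apply, Finset.mem_Ico]
  exact ⟨by rintro ⟨i, hi, rfl⟩; exact hi, fun hm => ⟨⟨m, by omega⟩, hm, rfl⟩⟩

theorem U1_eq_sum_offDiag (hdiag : ∀ i, R i i = 0) (π : Equiv.Perm (Fin n)) (t1 t2 : ℕ) :
    U1 n R π t1 t2 = ∑ x ∈ (window n t1 t2).offDiag, R (π x.1) (π x.2) := by
  rw [Finset.sum_offDiag_eq_sum_sum _ (g := fun a b => R (π a) (π b)) fun a => hdiag (π a)]
  simp only [U1, window, Finset.sum_filter, Finset.ite_sum_zero, ← ite_and, and_assoc]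

theorem U2_eq_sum_offDiag (hdiag : ∀ i, R i i = 0) (π : Equiv.Perm (Fin n)) (t1 t2 : ℕ) :
    U2 n R π t1 t2 = ∑ x ∈ (window n t1 t2)ᶜ.offDiag, R (π x.1) (π x.2) := by
  rw [Finset.sum_offDiag_eq_sum_sum _ (g := fun a b => R (π a) (π b)) fun a => hdiag (π a)]
  simp only [U2, window, Finset.compl_filter, Finset.sum_filter, Finset.ite_sum_zero, ← ite_and,
    not_and_or, not_le, not_lt]

end RING

theorem stmt4_general (n : ℕ) (hn : 4 ≤ n) (R : Fin n → Fin n → ℝ)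
    (hsym : ∀ i j, R i j = R j i) (hdiag : ∀ i, R i i = 0)
    (t1 t2 : ℕ) (h2n : t2 ≤ n) :
    pcov n (fun π => U1 n R π t1 t2) (fun π => U2 n R π t1 t2)
      = A n (t2 - t1)
          * ((rdsq n R - (r0 n R) ^ 2) - 2 * ((n : ℝ) - 1) * (r1sq n R - (r0 n R) ^ 2)) := by
  have hW : #(window n t1 t2) = t2 - t1 := card_window h2n
  have hWc : #(window n t1 t2)ᶜ = n - (t2 - t1) := by
    rw [Finset.card_compl, Fintype.card_fin, hW]
  simp only [U1_eq_sum_offDiag R hdiag, U2_eq_sum_offDiag R hdiag]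
  rw [pcov_eq_pexp_mul_sub, pexp_sum_offDiag_mul_sum_offDiag R hsym hdiag disjoint_compl_right,
    pexp_sum_offDiag R hdiag, pexp_sum_offDiag R hdiag, hW, hWc,
    Nat.cast_sub (by omega : t2 - t1 ≤ n)]
  have h4 : (4 : ℝ) ≤ n := by exact_mod_cast hn
  have hn1 : (n : ℝ) - 1 ≠ 0 := by linarith
  have hn2 : (n : ℝ) - 2 ≠ 0 := by linarith
  have hn3 : (n : ℝ) - 3 ≠ 0 := by linarith
  simp only [A, rdsq, r0, r1sq, Rbar, div_pow, ← Finset.sum_div]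
  field_simp
  ring

/-- Under the permutation null distribution, for all integers `0 ≤ t1 < t2 ≤ n`,
`Cov(U1^π(t1,t2), U2^π(t1,t2)) = A(t2 − t1)·((r_d² − r0²) − 2(n−1)(r1² − r0²))`. -/
theorem stmt4 (n : ℕ) (hn : 4 ≤ n) (R : Fin n → Fin n → ℝ)
    (hsym : ∀ i j, R i j = R j i) (hdiag : ∀ i, R i i = 0)
    (t1 t2 : ℕ) (h12 : t1 < t2) (h2n : t2 ≤ n) :
    pcov n (fun π => U1 n R π t1 t2) (fun π => U2 n R π t1 t2)
      = A n (t2 - t1)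
          * ((rdsq n R - (r0 n R) ^ 2) - 2 * ((n : ℝ) - 1) * (r1sq n R - (r0 n R) ^ 2)) :=
  stmt4_general n hn R hsym hdiag t1 t2 h2n
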